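/- arXiv:1210.2457 — 8 statements merged into one kernel-verified Lean document; each statement's English description precedes it below -/
import Mathlib

section
/- Let F be a family of subsets of V and let w, w' ∈ V⁺ be nonempty finite words with w ≤_F w'. Then for every finite word u ∈ V*, wu ≤_F w'u. -/
variable {V : Type*}

/-- One step of the score/accumulator update: reading letter `v` after having
score/accumulator pair `s` for the set `F`. -/
def mgStep [DecidableEq V] (F : Finset V) (s : ℕ × Finset V) (v : V) : ℕ × Finset V :=
  if v ∈ F then
    if s.2 = F.erase v then (s.1 + 1, (∅ : Finset V)) else (s.1, insert v s.2)
  else (0, (∅ : Finset V))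

/-- `scoreAcc F w = (Score_F(w), Acc_F(w))` for a (nonempty) finite word `w`. -/
def scoreAcc [DecidableEq V] (F : Finset V) (w : List V) : ℕ × Finset V :=
  w.foldl (mgStep F) (0, ∅)

/-- `w ≤_𝓕 w'`. -/
def ScoreLe [DecidableEq V] (𝓕 : Set (Finset V)) (w w' : List V) : Prop :=
  w.getLast? = w'.getLast? ∧
    ∀ F ∈ 𝓕,
      (scoreAcc F w).1 < (scoreAcc F w').1 ∨
        ((scoreAcc F w).1 = (scoreAcc F w').1 ∧ (scoreAcc F w).2 ⊆ (scoreAcc F w').2)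

/-- `w =_𝓕 w'`. -/
def ScoreEq [DecidableEq V] (𝓕 : Set (Finset V)) (w w' : List V) : Prop :=
  ScoreLe 𝓕 w w' ∧ ScoreLe 𝓕 w' w

/-! The accumulator of a state reachable from `(0, ∅)` is always empty or a proper subset of `F`.
Under this invariant one step of `mgStep` is monotone for the lexicographic order on
`(score, accumulator)`: the only delicate case is when the smaller state completes `F` while the
larger one, with the same score, does not; its accumulator would then contain `F.erase v` without
being equal to it, hence be all of `F`. Monotonicity then propagates along the suffix `u`. -/

lemma Finset.eq_erase_of_erase_subset_of_ssubset {α : Type*} [DecidableEq α] {s t : Finset α}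
    {a : α} (hst : s ⊂ t) (hts : t.erase a ⊆ s) : s = t.erase a := by
  obtain ⟨b, hbt, hsb⟩ := Finset.ssubset_iff_exists_subset_erase.mp hst
  obtain rfl : b = a := by
    by_contra hba
    exact Finset.notMem_erase b t (hsb (hts (Finset.mem_erase.mpr ⟨hba, hbt⟩)))
  exact hsb.antisymm hts

section

variable {F : Finset V}

def AccProper (F : Finset V) (s : ℕ × Finset V) : Prop :=
  s.2 = ∅ ∨ s.2 ⊂ F

lemma AccProper.subset {s : ℕ × Finset V} (hs : AccProper F s) : s.2 ⊆ F := by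
  rcases hs with h | h
  · simp [h]
  · exact h.subset

variable [DecidableEq V]

lemma AccProper.eq_erase_of_erase_subset {s : ℕ × Finset V} {v : V} (hs : AccProper F s)
    (h : F.erase v ⊆ s.2) : s.2 = F.erase v := by
  rcases hs with hempty | hproper
  · rw [hempty] at h ⊢
    exact (Finset.subset_empty.mp h).symm
  · exact Finset.eq_erase_of_erase_subset_of_ssubset hproper h

lemma accProper_mgStep {s : ℕ × Finset V} (hs : AccProper F s) (v : V) :
    AccProper F (mgStep F s v) := by
  unfold mgStep
  split_ifs with hv hcomplete
  · exact .inl rfl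
  · refine .inr (ssubset_of_subset_of_ne (Finset.insert_subset hv hs.subset) fun hF => ?_)
    by_cases hvs : v ∈ s.2
    · rw [Finset.insert_eq_self.mpr hvs] at hF
      rcases hs with h | h
      · simp [h] at hvs
      · exact h.ne hF
    · exact hcomplete (by rw [← hF, Finset.erase_insert hvs])
  · exact .inl rfl

lemma accProper_foldl (u : List V) {s : ℕ × Finset V} (hs : AccProper F s) :
    AccProper F (u.foldl (mgStep F) s) := by
  induction u generalizing s with
  | nil => exact hs
  | cons v u ih => exact ih (accProper_mgStep hs v)

lemma accProper_scoreAcc (w : List V) : AccProper F (scoreAcc F w) :=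
  accProper_foldl w (.inl rfl)

lemma mgStep_lex_mono {s s' : ℕ × Finset V} (hs' : AccProper F s')
    (h : Prod.Lex (· < ·) (· ⊆ ·) s s') (v : V) :
    Prod.Lex (· < ·) (· ⊆ ·) (mgStep F s v) (mgStep F s' v) := by
  rw [Prod.lex_def] at h ⊢
  unfold mgStep
  split_ifs with _ hcomplete hcomplete'
  · rcases h with hlt | ⟨heq, -⟩
    · exact .inl (Nat.succ_lt_succ hlt)
    · exact .inr ⟨congrArg (· + 1) heq, subset_rfl⟩
  · rcases h with hlt | ⟨-, hsub⟩
    · exact (Nat.succ_le_of_lt hlt).lt_or_eq.imp_right fun heq => ⟨heq, Finset.empty_subset _⟩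
    · exact (hcomplete' (hs'.eq_erase_of_erase_subset (hcomplete ▸ hsub))).elim
  · rcases h with hlt | ⟨heq, -⟩
    · exact .inl (hlt.trans (Nat.lt_succ_self _))
    · exact .inl (heq ▸ Nat.lt_succ_self _)
  · exact h.imp_right fun ⟨heq, hsub⟩ => ⟨heq, Finset.insert_subset_insert v hsub⟩
  · exact .inr ⟨rfl, subset_rfl⟩

lemma foldl_mgStep_lex_mono (u : List V) {s s' : ℕ × Finset V} (hs' : AccProper F s')
    (h : Prod.Lex (· < ·) (· ⊆ ·) s s') :
    Prod.Lex (· < ·) (· ⊆ ·) (u.foldl (mgStep F) s) (u.foldl (mgStep F) s') := by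
  induction u generalizing s s' with
  | nil => exact h
  | cons v u ih => exact ih (accProper_mgStep hs' v) (mgStep_lex_mono hs' h v)

lemma scoreAcc_append (w u : List V) :
    scoreAcc F (w ++ u) = u.foldl (mgStep F) (scoreAcc F w) :=
  List.foldl_append

end

theorem scoreLe_append_right_general [DecidableEq V] (𝓕 : Set (Finset V)) (w w' : List V)
    (h : ScoreLe 𝓕 w w') (u : List V) :
    ScoreLe 𝓕 (w ++ u) (w' ++ u) := by
  obtain ⟨hlast, hscore⟩ := h
  refine ⟨by rw [List.getLast?_append, List.getLast?_append, hlast], fun F hF => ?_⟩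
  rw [← Prod.lex_def, scoreAcc_append, scoreAcc_append]
  exact foldl_mgStep_lex_mono u (accProper_scoreAcc w') (Prod.lex_def.mpr (hscore F hF))

/-- If `w ≤_𝓕 w'` (for nonempty words `w, w'`), then
`w·u ≤_𝓕 w'·u` for every finite word `u`. -/
theorem scoreLe_append_right [DecidableEq V] (𝓕 : Set (Finset V)) (w w' : List V)
    (hw : w ≠ []) (hw' : w' ≠ []) (h : ScoreLe 𝓕 w w') (u : List V) :
    ScoreLe 𝓕 (w ++ u) (w' ++ u) :=
  scoreLe_append_right_general 𝓕 w w' h u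
end

section
/- Let F be a family of subsets of V and let w, w' ∈ V⁺ be nonempty finite words with w =_F w'. Then for every finite word u ∈ V*, wu =_F w'u; in particular =_F is a congruence with respect to concatenation on the right. -/
variable {V : Type*}

/-- If `w =_𝓕 w'` (for nonempty words `w, w'`), then
`w·u =_𝓕 w'·u` for every finite word `u`; in particular `=_𝓕` is a congruence
with respect to concatenation on the right. -/
theorem scoreEq_append_right [DecidableEq V] (𝓕 : Set (Finset V)) (w w' : List V)
    (hw : w ≠ []) (hw' : w' ≠ []) (h : ScoreEq 𝓕 w w') (u : List V) :
    ScoreEq 𝓕 (w ++ u) (w' ++ u) := by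
  have key : ∀ F ∈ 𝓕, scoreAcc F w = scoreAcc F w' := by
    intro F hF
    rcases h.1.2 F hF with h1 | ⟨h1, h2⟩ <;> rcases h.2.2 F hF with h3 | ⟨h3, h4⟩ <;>
      first
      | omega
      | exact Prod.ext h1 (Finset.Subset.antisymm h2 h4)
  have hfold : ∀ (F : Finset V) (l : List V),
      scoreAcc F (l ++ u) = u.foldl (mgStep F) (scoreAcc F l) := by
    intro F l; simp [scoreAcc, List.foldl_append]
  have hlast : (w ++ u).getLast? = (w' ++ u).getLast? := by
    cases u with
    | nil => simpa using h.1.1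
    | cons a t =>
      rw [List.getLast?_append, List.getLast?_append]
      cases hh : (a :: t).getLast? with
      | none => simp at hh
      | some b => simp [hh]
  have hall : ∀ F ∈ 𝓕, scoreAcc F (w ++ u) = scoreAcc F (w' ++ u) := by
    intro F hF
    rw [hfold F w, hfold F w', key F hF]
  constructor <;> refine ⟨by simp [hlast], fun F hF => Or.inr ?_⟩ <;>
    simp [hall F hF]
end

section
/- For every nonempty finite word w ∈ V⁺ and every F ⊆ V, the accumulator Acc_F(w) is a proper subset of F whenever F is nonempty; in all cases Acc_F(w) ⊊ F or Acc_F(w) = ∅ ⊆ F with Acc_F(w) ≠ F (i.e., Acc_F(w) never equals F). -/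
variable {V : Type*}

/-- For every nonempty word `w` and every `F ⊆ V`, the accumulator
`Acc_F(w)` is contained in `F`, it is a proper subset of `F` whenever `F` is
nonempty, and in all cases `Acc_F(w) ⊊ F` or `Acc_F(w) = ∅`. -/
theorem acc_ssubset [DecidableEq V] (w : List V) (hw : w ≠ []) (F : Finset V) :
    (scoreAcc F w).2 ⊆ F ∧ (F.Nonempty → (scoreAcc F w).2 ⊂ F) ∧
      ((scoreAcc F w).2 ⊂ F ∨ (scoreAcc F w).2 = ∅) := by
  have key : ∀ (u : List V) (s : ℕ × Finset V), s.2 ⊆ F → (F.Nonempty → s.2 ≠ F) →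
      (u.foldl (mgStep F) s).2 ⊆ F ∧ (F.Nonempty → (u.foldl (mgStep F) s).2 ≠ F) := by
    intro u
    induction u with
    | nil => intro s h1 h2; exact ⟨h1, h2⟩
    | cons v t ih =>
      intro s h1 h2
      simp only [List.foldl_cons]
      apply ih
      · unfold mgStep
        split_ifs with hv he
        · simp
        · intro x hx
          simp only [Finset.mem_insert] at hx
          rcases hx with rfl | hx
          · exact hv
          · exact h1 hx
        · simp
      · unfold mgStep
        split_ifs with hv he
        · intro hF
          simp only
          exact fun h => hF.ne_empty h.symm
        · intro hF hins
          apply he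
          have hvs : v ∉ s.2 := by
            intro hvs
            apply h2 hF
            apply Finset.Subset.antisymm h1
            rw [← hins]
            intro x hx
            simp only [Finset.mem_insert] at hx
            rcases hx with rfl | hx
            · exact hvs
            · exact hx
          apply Finset.Subset.antisymm
          · intro x hx
            rw [Finset.mem_erase]
            refine ⟨fun h => hvs (h ▸ hx), h1 hx⟩
          · intro x hx
            rw [Finset.mem_erase] at hx
            have : x ∈ (F : Finset V) := hx.2
            rw [← hins] at this
            simp only [Finset.mem_insert] at this
            rcases this with rfl | h
            · exact absurd rfl hx.1
            · exact h
        · intro hF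
          exact fun h => hF.ne_empty h.symm
  obtain ⟨h1, h2⟩ := key w (0, ∅) (Finset.empty_subset F) (fun hF h => hF.ne_empty h.symm)
  refine ⟨h1, fun hF => h1.ssubset_of_ne (h2 hF), ?_⟩
  rcases F.eq_empty_or_nonempty with rfl | hF
  · exact Or.inr (Finset.subset_empty.mp h1)
  · exact Or.inl (h1.ssubset_of_ne (h2 hF))
end

section
/- Let A = (V, V0, V1, E) be an arena and let w be a play prefix in A (a nonempty finite word whose consecutive letters are related by E). If Score_F(w) ≥ 2 for some F ⊆ V, then F is a loop of A, i.e., F is a strongly connected subset of V: for all u, u' ∈ F there is a path from u to u' visiting only vertices in F. -/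
variable {V : Type*}

/-- An arena: a directed graph without terminal vertices, with the positions `V0`
of Player 0; Player 1's positions are the complement. -/
structure Arena (V : Type*) where
  V0 : Set V
  E : V → V → Prop
  succ : ∀ v, ∃ u, E v u

/-- The positions of Player `i`. -/
def Arena.pos (A : Arena V) (i : Fin 2) : Set V := if i = 0 then A.V0 else A.V0ᶜ

/-- An infinite play in the arena. -/
def IsPlay (A : Arena V) (ρ : ℕ → V) : Prop := ∀ n, A.E (ρ n) (ρ (n + 1))

/-- The prefix `ρ_0 ⋯ ρ_{n-1}` (of length `n`) of an infinite word. -/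
def prefixList (ρ : ℕ → V) (n : ℕ) : List V := (List.range n).map ρ

/-- The set of letters occurring infinitely often. -/
def infSet (ρ : ℕ → V) : Set V := {v | ∀ N, ∃ n, N ≤ n ∧ ρ n = v}

/-- The infinity set as a finset. -/
noncomputable def infFinset [Fintype V] (ρ : ℕ → V) : Finset V :=
  (Set.toFinite (infSet ρ)).toFinset

/-- A loop: a strongly connected subset, i.e. any two of its vertices are joined
by a path visiting only vertices of the set. -/
def IsLoop (A : Arena V) (C : Set V) : Prop :=
  ∀ u ∈ C, ∀ u' ∈ C, Relation.ReflTransGen (fun a b => A.E a b ∧ a ∈ C ∧ b ∈ C) u u'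

/-- A strategy, given as a function from (history, current vertex) to the next
vertex, which must move along an edge. -/
def IsStrat (A : Arena V) (σ : List V → V → V) : Prop := ∀ w v, A.E v (σ w v)

/-- A play consistent with the strategy `σ` of Player `i`. -/
def ConsWith (A : Arena V) (i : Fin 2) (σ : List V → V → V) (ρ : ℕ → V) : Prop :=
  IsPlay A ρ ∧ ∀ n, ρ n ∈ A.pos i → ρ (n + 1) = σ (prefixList ρ n) (ρ n)

/-- The winning region of Player `i` in the Muller game on `A` with winning
families `Fam 0`, `Fam 1`. -/
def MullerWinRegion [Fintype V] [DecidableEq V] (A : Arena V)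
    (Fam : Fin 2 → Set (Finset V)) (i : Fin 2) : Set V :=
  {v | ∃ σ, IsStrat A σ ∧ ∀ ρ, ρ 0 = v → ConsWith A i σ ρ → infFinset ρ ∈ Fam i}

/-! The score counts completed rounds, stretches inside `F` that visit every vertex of `F`.
Once a round has been completed, every vertex of `F` reaches, inside `F`, the current vertex and
every vertex accumulated since. When the next round completes, its vertices cover `F`, so every
vertex of `F` reaches every other one. -/

/-- `IsLoop A C` unfolds to `∀ u ∈ C, ∀ v ∈ C, A.ReachWithin C u v`. -/
def Arena.ReachWithin (A : Arena V) (C : Set V) : V → V → Prop :=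
  Relation.ReflTransGen (fun a b => A.E a b ∧ a ∈ C ∧ b ∈ C)

structure ScoreInvariant [DecidableEq V] (A : Arena V) (F : Finset V) (s : ℕ × Finset V)
    (ℓ : V) : Prop where
  reachWithin_of_mem_acc : ∀ v ∈ s.2, ℓ ∈ F ∧ A.ReachWithin F v ℓ
  reachWithin_of_score_pos :
    0 < s.1 → ℓ ∈ F ∧ ∀ u ∈ F, ∀ v ∈ insert ℓ s.2, A.ReachWithin F u v
  isLoop_of_two_le_score : 2 ≤ s.1 → IsLoop A F

namespace ScoreInvariant

variable [DecidableEq V] {A : Arena V} {F : Finset V} {n : ℕ} {acc : Finset V} {ℓ' ℓ : V}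

theorem initial (A : Arena V) (F : Finset V) (ℓ : V) : ScoreInvariant A F (0, ∅) ℓ :=
  ⟨by simp, by simp, by simp⟩

theorem complete_round (h : ScoreInvariant A F (n, acc) ℓ') (hℓ : ℓ ∈ F)
    (hacc : acc = F.erase ℓ) (hreach : ℓ' ∈ F → A.ReachWithin F ℓ' ℓ) :
    ScoreInvariant A F (n + 1, ∅) ℓ := by
  have mem_acc {u} (hu : u ∈ F) (huℓ : u ≠ ℓ) : u ∈ acc := hacc ▸ Finset.mem_erase.2 ⟨huℓ, hu⟩
  have reach_ℓ : ∀ u ∈ F, A.ReachWithin F u ℓ := by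
    intro u hu
    by_cases huℓ : u = ℓ
    · exact huℓ ▸ .refl
    · obtain ⟨hℓ', hu⟩ := h.reachWithin_of_mem_acc u (mem_acc hu huℓ)
      exact hu.trans (hreach hℓ')
  refine ⟨by simp, fun _ => ⟨hℓ, by simpa using reach_ℓ⟩, fun hn u hu v hv => ?_⟩
  by_cases hvℓ : v = ℓ
  · exact hvℓ ▸ reach_ℓ u hu
  · exact (h.reachWithin_of_score_pos (by omega)).2 u hu v
      (Finset.mem_insert_of_mem (mem_acc hv hvℓ))

theorem accumulate (h : ScoreInvariant A F (n, acc) ℓ') (hℓ : ℓ ∈ F)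
    (hreach : ℓ' ∈ F → A.ReachWithin F ℓ' ℓ) :
    ScoreInvariant A F (n, insert ℓ acc) ℓ := by
  refine ⟨fun v hv => ⟨hℓ, ?_⟩, fun hn => ⟨hℓ, fun u hu v hv => ?_⟩, h.isLoop_of_two_le_score⟩
  · rcases Finset.mem_insert.1 hv with rfl | hv
    · exact .refl
    · obtain ⟨hℓ', hv⟩ := h.reachWithin_of_mem_acc v hv
      exact hv.trans (hreach hℓ')
  · obtain ⟨hℓ', hreach_old⟩ := h.reachWithin_of_score_pos hn
    rw [Finset.insert_idem] at hv
    rcases Finset.mem_insert.1 hv with rfl | hv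
    · exact (hreach_old u hu ℓ' (Finset.mem_insert_self _ _)).trans (hreach hℓ')
    · exact hreach_old u hu v (Finset.mem_insert_of_mem hv)

/-- The step hypothesis `hreach` holds when `A.E ℓ' ℓ`, and also when `ℓ' = ℓ`, which covers the
first letter of a word. -/
theorem mgStep {s : ℕ × Finset V} (h : ScoreInvariant A F s ℓ')
    (hreach : ℓ' ∈ F → ℓ ∈ F → A.ReachWithin F ℓ' ℓ) :
    ScoreInvariant A F (_root_.mgStep F s ℓ) ℓ := by
  unfold _root_.mgStep
  split_ifs with hℓ hacc
  · exact complete_round h hℓ hacc (hreach · hℓ)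
  · exact accumulate h hℓ (hreach · hℓ)
  · exact initial A F ℓ

theorem foldl_mgStep {s : ℕ × Finset V} {x : V} {w : List V} (h : ScoreInvariant A F s x)
    (hw : List.IsChain A.E (x :: w)) :
    ScoreInvariant A F (w.foldl (_root_.mgStep F) s) ((x :: w).getLast (List.cons_ne_nil x w)) := by
  induction w generalizing s x with
  | nil => exact h
  | cons y w ih =>
    obtain ⟨hxy, hw⟩ := List.isChain_cons_cons.1 hw
    rw [List.getLast_cons_cons]
    exact ih (h.mgStep fun hx hy => .single ⟨hxy, hx, hy⟩) hw

theorem of_isChain (A : Arena V) (F : Finset V) {x : V} {w : List V}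
    (hw : List.IsChain A.E (x :: w)) :
    ScoreInvariant A F (_root_.scoreAcc F (x :: w)) ((x :: w).getLast (List.cons_ne_nil x w)) :=
  ((initial A F x).mgStep fun _ _ => .refl).foldl_mgStep hw

end ScoreInvariant

theorem score_ge_two_isLoop_general [DecidableEq V] (A : Arena V) (w : List V)
    (hchain : List.Chain' A.E w) (F : Finset V)
    (h2 : 2 ≤ (scoreAcc F w).1) :
    IsLoop A (↑F : Set V) := by
  cases w with
  | nil => simp [scoreAcc] at h2
  | cons x w => exact (ScoreInvariant.of_isChain A F hchain).isLoop_of_two_le_score h2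

/-- If `w` is a play prefix of the arena `A` and `Score_F(w) ≥ 2`
for some `F ⊆ V`, then `F` is a loop of `A`, i.e. a strongly connected subset. -/
theorem score_ge_two_isLoop [Fintype V] [DecidableEq V] (A : Arena V) (w : List V)
    (hw : w ≠ []) (hchain : List.Chain' A.E w) (F : Finset V)
    (h2 : 2 ≤ (scoreAcc F w).1) :
    IsLoop A (↑F : Set V) :=
  score_ge_two_isLoop_general A w hchain F h2
end

section
/- Let ρ ∈ V^ω be an infinite word over a finite set V and let Inf(ρ) be the set of letters occurring infinitely often in ρ. Then Inf(ρ) is the unique set F ⊆ V such that Score_F of the prefixes of ρ tends to infinity while being reset to 0 only finitely often, i.e., the unique F such that only finitely many positions n satisfy ρ_n ∉ F and Score_F(ρ_0…ρ_n) → ∞ as n → ∞. -/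
variable {V : Type*}

section MGAux
variable [DecidableEq V] (F : Finset V) (ρ : ℕ → V)

lemma mg_base : scoreAcc F (prefixList ρ 0) = (0, ∅) := by
  simp [scoreAcc, prefixList]

lemma mg_step (n : ℕ) :
    scoreAcc F (prefixList ρ (n + 1)) = mgStep F (scoreAcc F (prefixList ρ n)) (ρ n) := by
  have : prefixList ρ (n + 1) = prefixList ρ n ++ [ρ n] := by
    simp [prefixList, List.range_succ]
  rw [scoreAcc, this, List.foldl_append]
  rfl

lemma mg_mono {n : ℕ} (h : ρ n ∈ F) :
    (scoreAcc F (prefixList ρ n)).1 ≤ (scoreAcc F (prefixList ρ (n + 1))).1 := by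
  rw [mg_step]
  unfold mgStep
  split_ifs <;> simp

lemma mg_strict {n : ℕ} (h : (scoreAcc F (prefixList ρ n)).1 < (scoreAcc F (prefixList ρ (n + 1))).1) :
    ρ n ∈ F ∧ (scoreAcc F (prefixList ρ n)).2 = F.erase (ρ n) ∧
      scoreAcc F (prefixList ρ (n + 1)) = ((scoreAcc F (prefixList ρ n)).1 + 1, ∅) := by
  rw [mg_step] at h ⊢
  unfold mgStep at h ⊢
  split_ifs at h ⊢ with h1 h2
  · exact ⟨h1, h2, rfl⟩
  · simp at h
  · simp at h

lemma mg_acc_new {n : ℕ} {v : V} (h : ρ n ≠ v) (h2 : v ∉ (scoreAcc F (prefixList ρ n)).2) :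
    v ∉ (scoreAcc F (prefixList ρ (n + 1))).2 := by
  rw [mg_step]
  unfold mgStep
  split_ifs <;> simp [h2, Ne.symm h]

lemma mg_no_inc_acc {n : ℕ} (h1 : ρ n ∈ F)
    (h2 : (scoreAcc F (prefixList ρ (n + 1))).1 ≠ (scoreAcc F (prefixList ρ n)).1 + 1) :
    (scoreAcc F (prefixList ρ (n + 1))).2 = insert (ρ n) (scoreAcc F (prefixList ρ n)).2 := by
  rw [mg_step] at h2 ⊢
  unfold mgStep at h2 ⊢
  split_ifs at h2 ⊢ with h3
  · simp at h2
  · rfl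

lemma mg_acc_sub (hF : F.Nonempty) (n : ℕ) :
    (scoreAcc F (prefixList ρ n)).2 ⊆ F ∧ (scoreAcc F (prefixList ρ n)).2 ≠ F := by
  induction n with
  | zero =>
    rw [mg_base]
    exact ⟨Finset.empty_subset F, fun h => hF.ne_empty h.symm⟩
  | succ n ih =>
    rw [mg_step]
    unfold mgStep
    split_ifs with h1 h2
    · exact ⟨Finset.empty_subset F, fun h => hF.ne_empty h.symm⟩
    · constructor
      · exact Finset.insert_subset h1 ih.1
      · intro h
        apply h2
        have hv : ρ n ∉ (scoreAcc F (prefixList ρ n)).2 := by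
          intro hv
          exact ih.2 (by rwa [Finset.insert_eq_self.2 hv] at h)
        apply Finset.Subset.antisymm
        · intro x hx
          refine Finset.mem_erase.2 ⟨fun hxv => hv (hxv ▸ hx), h ▸ Finset.mem_insert_of_mem hx⟩
        · intro x hx
          rcases Finset.mem_erase.1 hx with ⟨hxv, hxF⟩
          rcases Finset.mem_insert.1 (h ▸ hxF) with h' | h'
          · exact absurd h' hxv
          · exact h'
    · exact ⟨Finset.empty_subset F, fun h => hF.ne_empty h.symm⟩

end MGAux

/-- `Inf(ρ)` is the unique set `F` such that `Score_F` of the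
prefixes of `ρ` tends to infinity while being reset (by visits outside of `F`)
only finitely often. -/
theorem infSet_unique_score [Fintype V] [DecidableEq V] (ρ : ℕ → V) (F : Finset V) :
    ({n | ρ n ∉ F}.Finite ∧
        Filter.Tendsto (fun n => (scoreAcc F (prefixList ρ (n + 1))).1)
          Filter.atTop Filter.atTop) ↔
      (↑F : Set V) = infSet ρ := by
  constructor
  · rintro ⟨hfin, htend⟩
    have hinc : ∀ a : ℕ, ∃ n, a ≤ n ∧
        (scoreAcc F (prefixList ρ n)).1 < (scoreAcc F (prefixList ρ (n + 1))).1 := by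
      intro a
      by_contra hcon
      push_neg at hcon
      have hle : ∀ m, a ≤ m →
          (scoreAcc F (prefixList ρ m)).1 ≤ (scoreAcc F (prefixList ρ a)).1 := by
        intro m hm
        induction m, hm using Nat.le_induction with
        | base => exact le_rfl
        | succ m hm ih => exact le_trans (hcon m hm) ih
      obtain ⟨b, hb⟩ := Filter.tendsto_atTop_atTop.mp htend
        ((scoreAcc F (prefixList ρ a)).1 + 1)
      have h1 := hb (max a b) (le_max_right a b)
      have h2 := hle (max a b + 1) (le_trans (le_max_left a b) (Nat.le_succ _))
      omega
    apply Set.Subset.antisymm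
    · intro v hv
      have hvF : v ∈ F := hv
      simp only [infSet, Set.mem_setOf_eq]
      intro N0
      by_contra hcon
      push_neg at hcon
      obtain ⟨n1, hn1, hs1⟩ := hinc N0
      obtain ⟨-, -, heq1⟩ := mg_strict F ρ hs1
      have hA1 : (scoreAcc F (prefixList ρ (n1 + 1))).2 = ∅ := by rw [heq1]
      have hnot : ∀ m, n1 + 1 ≤ m → v ∉ (scoreAcc F (prefixList ρ m)).2 := by
        intro m hm
        induction m, hm using Nat.le_induction with
        | base => simp [hA1]
        | succ m hm ih => exact mg_acc_new F ρ (hcon m (by omega)) ih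
      obtain ⟨n2, hn2, hs2⟩ := hinc (n1 + 1)
      obtain ⟨hF2, hacc2, -⟩ := mg_strict F ρ hs2
      refine hnot n2 hn2 ?_
      rw [hacc2]
      exact Finset.mem_erase.2 ⟨fun h => hcon n2 (by omega) h.symm, hvF⟩
    · intro v hv
      obtain ⟨b, hb⟩ := hfin.bddAbove
      obtain ⟨n, hn, hρ⟩ := hv (b + 1)
      by_contra hvF
      have hmem : n ∈ {n | ρ n ∉ F} := by
        simp only [Set.mem_setOf_eq, hρ]
        exact fun h => hvF h
      have := hb hmem
      omega
  · intro hF_eq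
    have hNex : ∃ N, ∀ n, N ≤ n → ρ n ∈ F := by
      have hvN : ∀ v : V, ∃ Nv, ∀ n, Nv ≤ n → ρ n = v → ρ n ∈ F := by
        intro v
        by_cases hvF : v ∈ F
        · exact ⟨0, fun n _ h => h ▸ hvF⟩
        · have hvi : v ∉ infSet ρ := by
            rw [← hF_eq]; simpa using hvF
          simp only [infSet, Set.mem_setOf_eq, not_forall] at hvi
          obtain ⟨Nv, hNv⟩ := hvi
          push_neg at hNv
          exact ⟨Nv, fun n hn h => absurd h (hNv n hn)⟩
      choose g hg using hvN
      exact ⟨Finset.univ.sup g, fun n hn =>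
        hg (ρ n) n (le_trans (Finset.le_sup (Finset.mem_univ _)) hn) rfl⟩
    obtain ⟨N, hN⟩ := hNex
    have hfin : {n | ρ n ∉ F}.Finite := by
      refine Set.Finite.subset (Set.finite_Iio N) ?_
      intro n hn
      simp only [Set.mem_Iio]
      by_contra h
      push_neg at h
      exact hn (hN n h)
    have hFne : F.Nonempty := ⟨ρ N, hN N le_rfl⟩
    have hInfF : ∀ v ∈ F, ∀ a : ℕ, ∃ m, a ≤ m ∧ ρ m = v := by
      intro v hv a
      have : v ∈ infSet ρ := hF_eq ▸ (Finset.mem_coe.2 hv)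
      exact this a
    have hinc : ∀ n, N ≤ n → ∃ m, n ≤ m ∧
        (scoreAcc F (prefixList ρ (m + 1))).1 = (scoreAcc F (prefixList ρ m)).1 + 1 := by
      intro n hn
      by_contra hcon
      push_neg at hcon
      have hstep : ∀ m, n ≤ m →
          (scoreAcc F (prefixList ρ (m + 1))).2 = insert (ρ m) (scoreAcc F (prefixList ρ m)).2 :=
        fun m hm => mg_no_inc_acc F ρ (hN m (le_trans hn hm)) (hcon m hm)
      have hmono : ∀ a b, n ≤ a → a ≤ b →
          (scoreAcc F (prefixList ρ a)).2 ⊆ (scoreAcc F (prefixList ρ b)).2 := by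
        intro a b ha hab
        induction b, hab using Nat.le_induction with
        | base => exact subset_rfl
        | succ b hb ih =>
          refine ih.trans ?_
          rw [hstep b (le_trans ha hb)]
          exact Finset.subset_insert _ _
      have hall : ∀ v ∈ F, ∃ m, n ≤ m ∧ v ∈ (scoreAcc F (prefixList ρ (m + 1))).2 := by
        intro v hv
        obtain ⟨m, hm, hρm⟩ := hInfF v hv n
        refine ⟨m, hm, ?_⟩
        rw [hstep m hm, hρm]
        exact Finset.mem_insert_self _ _
      choose! g hg1 hg2 using hall
      set M := F.sup g + n + 1 with hM
      have hsub : F ⊆ (scoreAcc F (prefixList ρ M)).2 := by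
        intro v hv
        have h1 : g v + 1 ≤ M := by
          have := Finset.le_sup (f := g) hv
          omega
        exact hmono (g v + 1) M (by have := hg1 v hv; omega) h1 (hg2 v hv)
      exact (mg_acc_sub F ρ hFne M).2
        (Finset.Subset.antisymm (mg_acc_sub F ρ hFne M).1 hsub)
    have key : ∀ k : ℕ, ∃ n, N ≤ n ∧ ∀ m, n ≤ m → k ≤ (scoreAcc F (prefixList ρ m)).1 := by
      intro k
      induction k with
      | zero => exact ⟨N, le_rfl, fun m _ => Nat.zero_le _⟩
      | succ k ih =>
        obtain ⟨n, hnN, hn⟩ := ih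
        obtain ⟨m, hm, hminc⟩ := hinc n hnN
        refine ⟨m + 1, by omega, ?_⟩
        have hbase : k + 1 ≤ (scoreAcc F (prefixList ρ (m + 1))).1 := by
          rw [hminc]; exact Nat.succ_le_succ (hn m hm)
        intro m' hm'
        induction m', hm' using Nat.le_induction with
        | base => exact hbase
        | succ m' hm' ih' => exact le_trans ih' (mg_mono F ρ (hN m' (by omega)))
    refine ⟨hfin, ?_⟩
    rw [Filter.tendsto_atTop_atTop]
    intro k
    obtain ⟨n, -, hn⟩ := key k
    exact ⟨n, fun a ha => hn (a + 1) (by omega)⟩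
end

section
/- Let (F0, F1) be a partition of the set of loops of an arena A into the winning families of Player 0 and Player 1, let i ∈ {0,1}, and let ρ be a play in A. If MaxScore_{F_{1−i}}(ρ) < ∞, i.e., there is a bound k such that Score_F(w) ≤ k for every F ∈ F_{1−i} and every finite prefix w of ρ, then Inf(ρ) ∈ F_i, i.e., the play ρ is winning for Player i in the Muller game (A, F0, F1). -/
variable {V : Type*}

section Aux

variable {V : Type*}

lemma mem_infFinset [Fintype V] (ρ : ℕ → V) (v : V) :
    v ∈ infFinset ρ ↔ v ∈ infSet ρ := by
  simp [infFinset, Set.Finite.mem_toFinset]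

lemma scoreAcc_succ' [DecidableEq V] (F : Finset V) (ρ : ℕ → V) (n : ℕ) :
    scoreAcc F (prefixList ρ (n + 1)) = mgStep F (scoreAcc F (prefixList ρ n)) (ρ n) := by
  simp [scoreAcc, prefixList, List.range_succ]

lemma eventually_infSet [Fintype V] (ρ : ℕ → V) :
    ∃ N, ∀ n, N ≤ n → ρ n ∈ infSet ρ := by
  have h : ∀ v : V, ∃ N, ∀ n, N ≤ n → ρ n = v → v ∈ infSet ρ := by
    intro v
    by_cases hv : v ∈ infSet ρ
    · exact ⟨0, fun _ _ _ => hv⟩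
    · simp only [infSet, Set.mem_setOf_eq, not_forall, not_exists, not_and] at hv
      obtain ⟨N, hN⟩ := hv
      exact ⟨N, fun n hn he => absurd he (hN n hn)⟩
  choose f hf using h
  exact ⟨Finset.univ.sup f, fun n hn =>
    hf (ρ n) n (le_trans (Finset.le_sup (Finset.mem_univ _)) hn) rfl⟩

lemma infSet_nonempty [Finite V] (ρ : ℕ → V) : ∃ v, v ∈ infSet ρ := by
  obtain ⟨v, hv⟩ := Finite.exists_infinite_fiber ρ
  have hv' : (ρ ⁻¹' {v}).Infinite := Set.infinite_coe_iff.1 hv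
  refine ⟨v, fun N => ?_⟩
  obtain ⟨n, hn, hgt⟩ := hv'.exists_gt N
  exact ⟨n, hgt.le, hn⟩

lemma isLoop_infFinset [Fintype V] (A : Arena V) (ρ : ℕ → V) (h : IsPlay A ρ) :
    IsLoop A (↑(infFinset ρ) : Set V) := by
  obtain ⟨N, hN⟩ := eventually_infSet ρ
  have key : ∀ n m, N ≤ n → n ≤ m →
      Relation.ReflTransGen
        (fun a b => A.E a b ∧ a ∈ (↑(infFinset ρ) : Set V) ∧ b ∈ (↑(infFinset ρ) : Set V))
        (ρ n) (ρ m) := by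
    intro n m hn hm
    induction m, hm using Nat.le_induction with
    | base => exact Relation.ReflTransGen.refl
    | succ m hm ih =>
      refine ih.tail ⟨h m, ?_, ?_⟩
      · exact (mem_infFinset ρ _).2 (hN m (hn.trans hm))
      · exact (mem_infFinset ρ _).2 (hN (m + 1) (by omega))
  intro u hu u' hu'
  have hu1 : u ∈ infSet ρ := (mem_infFinset ρ u).1 hu
  have hu2 : u' ∈ infSet ρ := (mem_infFinset ρ u').1 hu'
  obtain ⟨n, hn, hne⟩ := hu1 N
  obtain ⟨m, hm, hme⟩ := hu2 n
  rw [← hne, ← hme]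
  exact key n m hn hm

end Aux

/-- In a Muller game `(A, Fam 0, Fam 1)` (where `(Fam 0, Fam 1)`
partitions the loops of `A`), if the scores of the sets in `Fam (1-i)` are
bounded along a play `ρ`, then `Inf(ρ) ∈ Fam i`, i.e. `ρ` is winning for
Player `i`. -/
theorem bounded_scores_implies_win [Fintype V] [DecidableEq V] (A : Arena V)
    (Fam : Fin 2 → Set (Finset V))
    (hcover : ∀ C : Finset V, C ∈ Fam 0 ∪ Fam 1 ↔ IsLoop A (↑C : Set V))
    (hdisj : Disjoint (Fam 0) (Fam 1)) (i : Fin 2) (ρ : ℕ → V) (hplay : IsPlay A ρ)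
    (k : ℕ) (hk : ∀ F ∈ Fam (1 - i), ∀ n, (scoreAcc F (prefixList ρ (n + 1))).1 ≤ k) :
    infFinset ρ ∈ Fam i := by
  obtain ⟨N, hN⟩ := eventually_infSet ρ
  set F : Finset V := infFinset ρ with hFdef
  have hFne : F.Nonempty := by
    obtain ⟨v, hv⟩ := infSet_nonempty ρ
    exact ⟨v, (mem_infFinset ρ v).2 hv⟩
  have hmem : ∀ n, N ≤ n → ρ n ∈ F := fun n hn => (mem_infFinset ρ _).2 (hN n hn)
  set s : ℕ → ℕ × Finset V := fun n => scoreAcc F (prefixList ρ n) with hsdef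
  have hstep : ∀ n, s (n + 1) = mgStep F (s n) (ρ n) := fun n => scoreAcc_succ' F ρ n
  have hs0 : s 0 = (0, ∅) := by simp [hsdef, scoreAcc, prefixList]
  -- invariant: acc ⊆ F and acc ≠ F
  have hinv : ∀ n, (s n).2 ⊆ F ∧ (s n).2 ≠ F := by
    intro n
    induction n with
    | zero =>
      rw [hs0]
      exact ⟨Finset.empty_subset _, fun h => hFne.ne_empty h.symm⟩
    | succ n ih =>
      rw [hstep n]
      unfold mgStep
      split_ifs with h1 h2 <;> dsimp only
      · exact ⟨Finset.empty_subset _, fun h => hFne.ne_empty h.symm⟩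
      · refine ⟨Finset.insert_subset h1 ih.1, fun heq => ?_⟩
        by_cases hx : ρ n ∈ (s n).2
        · rw [Finset.insert_eq_self.2 hx] at heq
          exact ih.2 heq
        · apply h2
          apply Finset.Subset.antisymm
          · intro y hy
            rw [Finset.mem_erase]
            exact ⟨fun h => hx (h ▸ hy), heq ▸ Finset.mem_insert_of_mem hy⟩
          · intro y hy
            rw [Finset.mem_erase] at hy
            have := heq ▸ hy.2
            rcases Finset.mem_insert.1 (show y ∈ insert (ρ n) (s n).2 from by
              rw [heq]; exact hy.2) with h | h
            · exact absurd h hy.1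
            · exact h
      · exact ⟨Finset.empty_subset _, fun h => hFne.ne_empty h.symm⟩
  -- monotonicity of score after N
  have hmono1 : ∀ m, N ≤ m → (s m).1 ≤ (s (m + 1)).1 := by
    intro m hm
    rw [hstep m]
    unfold mgStep
    rw [if_pos (hmem m hm)]
    split_ifs <;> simp
  have hmono : ∀ a b, N ≤ a → a ≤ b → (s a).1 ≤ (s b).1 := by
    intro a b ha hab
    induction b, hab using Nat.le_induction with
    | base => exact le_rfl
    | succ b hb ih => exact ih.trans (hmono1 b (ha.trans hb))
  -- growth
  have grow : ∀ n, N ≤ n → ∃ m, n ≤ m ∧ (s m).1 < (s (m + 1)).1 := by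
    intro n hn
    by_contra hcon
    push_neg at hcon
    have hins : ∀ m, n ≤ m → s (m + 1) = ((s m).1, insert (ρ m) (s m).2) := by
      intro m hm
      have hρ : ρ m ∈ F := hmem m (hn.trans hm)
      have h2 : (s m).2 ≠ F.erase (ρ m) := by
        intro h
        have heq := hstep m
        rw [mgStep, if_pos hρ, if_pos h] at heq
        have : (s (m + 1)).1 = (s m).1 + 1 := by rw [heq]
        have := hcon m hm
        omega
      rw [hstep m]
      unfold mgStep
      rw [if_pos hρ, if_neg h2]
    have haccmono : ∀ a b, n ≤ a → a ≤ b → (s a).2 ⊆ (s b).2 := by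
      intro a b ha hab
      induction b, hab using Nat.le_induction with
      | base => exact Finset.Subset.refl _
      | succ b hb ih =>
        rw [hins b (ha.trans hb)]
        exact ih.trans (Finset.subset_insert _ _)
    have main : ∀ c, ∀ m, n ≤ m → (F \ (s m).2).card ≤ c → False := by
      intro c
      induction c with
      | zero =>
        intro m hm hc
        have hss : (s m).2 ⊂ F := (Finset.ssubset_iff_of_subset (hinv m).1).2 (by
          rcases Finset.exists_of_ssubset (Finset.ssubset_iff_subset_ne.2 ⟨(hinv m).1, (hinv m).2⟩)
            with ⟨x, hx1, hx2⟩
          exact ⟨x, hx1, hx2⟩)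
        obtain ⟨x, hx1, hx2⟩ := Finset.exists_of_ssubset hss
        have : x ∈ F \ (s m).2 := Finset.mem_sdiff.2 ⟨hx1, hx2⟩
        have := Finset.card_pos.2 ⟨x, this⟩
        omega
      | succ c ih =>
        intro m hm hc
        obtain ⟨x, hx⟩ : (F \ (s m).2).Nonempty := by
          rcases Finset.exists_of_ssubset
            (Finset.ssubset_iff_subset_ne.2 ⟨(hinv m).1, (hinv m).2⟩) with ⟨x, hx1, hx2⟩
          exact ⟨x, Finset.mem_sdiff.2 ⟨hx1, hx2⟩⟩
        have hxF : x ∈ F := (Finset.mem_sdiff.1 hx).1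
        have hxA : x ∉ (s m).2 := (Finset.mem_sdiff.1 hx).2
        have hxinf : x ∈ infSet ρ := (mem_infFinset ρ x).1 hxF
        have hex : ∃ q, m ≤ q ∧ ρ q = x := hxinf m
        classical
        set q := Nat.find hex with hqdef
        obtain ⟨hq1, hq2⟩ := Nat.find_spec hex
        have hnotin : ∀ r, m ≤ r → r ≤ q → x ∉ (s r).2 := by
          intro r hr hrq
          induction r, hr using Nat.le_induction with
          | base => exact hxA
          | succ r hr ihr =>
            rw [hins r (hm.trans hr)]
            simp only [Finset.mem_insert]
            rintro (h | h)
            · exact Nat.find_min hex (by omega) ⟨hr, h.symm⟩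
            · exact ihr (by omega) h
        have hq1' : n ≤ q := hm.trans hq1
        have hacc2 : (s (q + 1)).2 = insert x (s q).2 := by
          rw [hins q hq1', hq2]
        have hcard : (F \ (s (q + 1)).2).card ≤ c := by
          have hsub : F \ (s (q + 1)).2 ⊆ (F \ (s m).2).erase x := by
            intro y hy
            rw [Finset.mem_sdiff] at hy
            rw [Finset.mem_erase, Finset.mem_sdiff]
            refine ⟨fun h => hy.2 (by rw [hacc2, h]; exact Finset.mem_insert_self _ _),
              hy.1, fun h => hy.2 ?_⟩
            rw [hacc2]
            exact Finset.mem_insert_of_mem (haccmono m q hm hq1 h)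
          have h1 := Finset.card_le_card hsub
          have h2 := Finset.card_erase_of_mem hx
          omega
        exact ih (q + 1) (by omega) hcard
    exact main (F \ (s n).2).card n le_rfl le_rfl
  -- unbounded scores
  have unb : ∀ j : ℕ, ∃ m, N ≤ m ∧ j ≤ (s m).1 := by
    intro j
    induction j with
    | zero => exact ⟨N, le_rfl, Nat.zero_le _⟩
    | succ j ih =>
      obtain ⟨m, hm, hj⟩ := ih
      obtain ⟨p, hp, hlt⟩ := grow m hm
      have := hmono m p hm hp
      exact ⟨p + 1, by omega, by omega⟩
  have hnot : F ∉ Fam (1 - i) := by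
    intro hFmem
    obtain ⟨m, hmN, hm⟩ := unb (k + 1)
    cases m with
    | zero =>
      rw [hs0] at hm
      omega
    | succ m' =>
      have := hk F hFmem m'
      have : (s (m' + 1)).1 ≤ k := this
      omega
  have hloop : IsLoop A (↑F : Set V) := isLoop_infFinset A ρ hplay
  have hun := (hcover F).2 hloop
  fin_cases i
  · rcases hun with h | h
    · exact h
    · exact absurd h (by simpa using hnot)
  · rcases hun with h | h
    · exact absurd h (by simpa using hnot)
    · exact h
end

section
/- Let G = (A, F0, F1) be a Muller game and G_S the associated safety game tracking Player 1's scores up to threshold 3, with f(v) = [v]. For every vertex v of G: if f(v) ∈ W_0(G_S) then v ∈ W_0(G). -/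
variable {V : Type*}

/-- `MaxScore_𝓕(w) ≤ k`: every nonempty prefix of `w` has all its `𝓕`-scores at most `k`. -/
def MaxScoreLe [DecidableEq V] (𝓕 : Set (Finset V)) (w : List V) (k : ℕ) : Prop :=
  ∀ F ∈ 𝓕, ∀ x : List V, x ≠ [] → x <+: w → (scoreAcc F x).1 ≤ k

/-- A (finite) play prefix in the arena. -/
def PlayPref (A : Arena V) (w : List V) : Prop := w ≠ [] ∧ List.Chain' A.E w

/-- Play prefixes in which Player 1's scores stay at most 2. -/
def PlaysLt3 [DecidableEq V] (A : Arena V) (F1 : Set (Finset V)) : Set (List V) :=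
  {w | PlayPref A w ∧ MaxScoreLe F1 w 2}

/-- Play prefixes in which Player 1 just reached a score of 3. -/
def PlaysEq3 [DecidableEq V] (A : Arena V) (F1 : Set (Finset V)) : Set (List V) :=
  {w | PlayPref A w ∧ ∃ x v, w = x ++ [v] ∧ MaxScoreLe F1 x 2 ∧
      MaxScoreLe F1 w 3 ∧ ¬MaxScoreLe F1 w 2}

def PlaysLe3 [DecidableEq V] (A : Arena V) (F1 : Set (Finset V)) : Set (List V) :=
  PlaysLt3 A F1 ∪ PlaysEq3 A F1

theorem ScoreLe.trans' [DecidableEq V] {𝓕 : Set (Finset V)} {a b c : List V}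
    (h1 : ScoreLe 𝓕 a b) (h2 : ScoreLe 𝓕 b c) : ScoreLe 𝓕 a c := by
  refine ⟨h1.1.trans h2.1, fun F hF => ?_⟩
  rcases h1.2 F hF with h | ⟨he, hs⟩ <;> rcases h2.2 F hF with h' | ⟨he', hs'⟩
  · exact Or.inl (h.trans h')
  · exact Or.inl (by omega)
  · exact Or.inl (by omega)
  · exact Or.inr ⟨by omega, hs.trans hs'⟩

/-- The `=_{F1}`-equivalence as a setoid on `Plays_{≤3}`. -/
def sgSetoid [DecidableEq V] (A : Arena V) (F1 : Set (Finset V)) :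
    Setoid {w : List V // w ∈ PlaysLe3 A F1} where
  r a b := ScoreEq F1 a.1 b.1
  iseqv := by
    refine ⟨fun a => ⟨⟨rfl, fun F _ => Or.inr ⟨rfl, subset_rfl⟩⟩,
        ⟨rfl, fun F _ => Or.inr ⟨rfl, subset_rfl⟩⟩⟩,
      fun h => ⟨h.2, h.1⟩, fun h h' => ⟨h.1.trans' h'.1, h'.2.trans' h.2⟩⟩

/-- Vertices of the safety game: `=_{F1}`-classes of `Plays_{≤3}`. -/
def SVert [DecidableEq V] (A : Arena V) (F1 : Set (Finset V)) :=
  Quotient (sgSetoid A F1)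

/-- The (common) last vertex of the members of a class. -/
def sgLast [DecidableEq V] (A : Arena V) (F1 : Set (Finset V)) :
    SVert A F1 → Option V :=
  Quotient.lift (fun p => p.1.getLast?) (fun _ _ h => h.1.1)

/-- Positions of Player 0 in the safety game: classes whose last vertex lies in `V0`. -/
def sgPos0 [DecidableEq V] (A : Arena V) (F1 : Set (Finset V)) : Set (SVert A F1) :=
  {a | ∃ v ∈ A.V0, sgLast A F1 a = some v}

/-- Positions of Player `i` in the safety game. -/
def sgPos [DecidableEq V] (A : Arena V) (F1 : Set (Finset V)) (i : Fin 2) :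
    Set (SVert A F1) :=
  if i = 0 then sgPos0 A F1 else (sgPos0 A F1)ᶜ

/-- Edges of the safety game: from `[w]` to `[wv]` for `w ∈ Plays_{<3}` and
`(last w, v) ∈ E`. -/
def sgE [DecidableEq V] (A : Arena V) (F1 : Set (Finset V)) :
    SVert A F1 → SVert A F1 → Prop := fun a b =>
  ∃ (w : List V) (hw : w ∈ PlaysLe3 A F1) (v : V) (hwv : w ++ [v] ∈ PlaysLe3 A F1)
    (u : V), w ∈ PlaysLt3 A F1 ∧ w.getLast? = some u ∧ A.E u v ∧
      a = Quotient.mk (sgSetoid A F1) ⟨w, hw⟩ ∧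
      b = Quotient.mk (sgSetoid A F1) ⟨w ++ [v], hwv⟩

/-- The safe vertices: classes of `Plays_{<3}`. -/
def sgSafe [DecidableEq V] (A : Arena V) (F1 : Set (Finset V)) : Set (SVert A F1) :=
  {a | ∃ (w : List V) (hw : w ∈ PlaysLe3 A F1),
    w ∈ PlaysLt3 A F1 ∧ a = Quotient.mk (sgSetoid A F1) ⟨w, hw⟩}

theorem singleton_mem_lt3 [DecidableEq V] (A : Arena V) (F1 : Set (Finset V)) (v : V) :
    [v] ∈ PlaysLt3 A F1 := by
  refine ⟨⟨by simp, by simp [List.Chain']⟩, fun F _ x hx hpre => ?_⟩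
  have hxv : x = [v] := by
    rcases hpre with ⟨t, ht⟩
    cases x with
    | nil => exact absurd rfl hx
    | cons a l =>
      rw [List.cons_append] at ht
      injection ht with h1 h2
      obtain ⟨rfl, -⟩ := List.append_eq_nil_iff.mp h2
      rw [h1]
  subst hxv
  have hsc : scoreAcc F [v] = mgStep F (0, ∅) v := rfl
  rw [hsc, mgStep]
  split_ifs <;> simp

/-- The map `f(v) = [v]` from vertices of the Muller game to the safety game. -/
def sgF [DecidableEq V] (A : Arena V) (F1 : Set (Finset V)) (v : V) : SVert A F1 :=
  Quotient.mk (sgSetoid A F1) ⟨[v], Or.inl (singleton_mem_lt3 A F1 v)⟩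

/-- A strategy of Player `i` in the safety game (it must move along an edge
whenever the current vertex belongs to Player `i` and has a successor). -/
def sgStratFor [DecidableEq V] (A : Arena V) (F1 : Set (Finset V)) (i : Fin 2)
    (σ : List (SVert A F1) → SVert A F1 → SVert A F1) : Prop :=
  ∀ h a, a ∈ sgPos A F1 i → (∃ b, sgE A F1 a b) → sgE A F1 a (σ h a)

/-- A finite play (prefix) in the safety game consistent with the strategy `σ`
of Player `i`. -/
def sgConsList [DecidableEq V] (A : Arena V) (F1 : Set (Finset V)) (i : Fin 2)
    (σ : List (SVert A F1) → SVert A F1 → SVert A F1) (p : List (SVert A F1)) : Prop :=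
  List.Chain' (sgE A F1) p ∧
    ∀ n (h : n + 1 < p.length), p[n]'(by omega) ∈ sgPos A F1 i →
      p[n + 1]'h = σ (p.take n) (p[n]'(by omega))

/-- An infinite play in the safety game consistent with the strategy `σ` of Player `i`. -/
def sgConsInf [DecidableEq V] (A : Arena V) (F1 : Set (Finset V)) (i : Fin 2)
    (σ : List (SVert A F1) → SVert A F1 → SVert A F1) (ρ : ℕ → SVert A F1) : Prop :=
  (∀ n, sgE A F1 (ρ n) (ρ (n + 1))) ∧
    ∀ n, ρ n ∈ sgPos A F1 i → ρ (n + 1) = σ (prefixList ρ n) (ρ n)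

/-- Winning region of Player 0 in the safety game: she has a strategy such that
every consistent (finite) play visits only safe vertices. -/
def sgWin0 [DecidableEq V] (A : Arena V) (F1 : Set (Finset V)) : Set (SVert A F1) :=
  {a | ∃ σ, sgStratFor A F1 0 σ ∧
    ∀ p, sgConsList A F1 0 σ p → p.head? = some a → ∀ x ∈ p, x ∈ sgSafe A F1}

/-- Winning region of Player 1 in the safety game: he has a strategy such that
every maximal consistent play (infinite, or finite ending in a terminal vertex)
visits an unsafe vertex. -/
def sgWin1 [DecidableEq V] (A : Arena V) (F1 : Set (Finset V)) : Set (SVert A F1) :=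
  {a | ∃ τ, sgStratFor A F1 1 τ ∧
    (∀ ρ, ρ 0 = a → sgConsInf A F1 1 τ ρ → ∃ n, ρ n ∉ sgSafe A F1) ∧
    (∀ p, sgConsList A F1 1 τ p → p.head? = some a →
      ∀ (hne : p ≠ []), (∀ b, ¬sgE A F1 (p.getLast hne) b) → ∃ x ∈ p, x ∉ sgSafe A F1)}

/-- Winning region of Player `i` in the safety game. -/
def sgWin [DecidableEq V] (A : Arena V) (F1 : Set (Finset V)) (i : Fin 2) :
    Set (SVert A F1) :=
  if i = 0 then sgWin0 A F1 else sgWin1 A F1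

/-- The order `≤_{F1}` lifted to `=_{F1}`-classes. -/
def sgLe [DecidableEq V] (A : Arena V) (F1 : Set (Finset V)) :
    SVert A F1 → SVert A F1 → Prop := fun a b =>
  ∃ p q : {w : List V // w ∈ PlaysLe3 A F1},
    Quotient.mk (sgSetoid A F1) p = a ∧ Quotient.mk (sgSetoid A F1) q = b ∧
      ScoreLe F1 p.1 q.1

/-!
Player 0 plays the Muller game by simulating a winning strategy of the safety game on the
`=_{F1}`-classes of the play prefixes: at each move she picks a successor whose class is the
one prescribed by the safety strategy. The resulting class sequence is a play of the safety
game from `f(v)`, so it stays safe, i.e. every prefix keeps all `F1`-scores below 3. If the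
infinity set `F` of the play were in `F1`, the play would eventually stay in `F` and sweep
through it again and again, driving `Score_F` to infinity. Hence `Inf(ρ)`, a loop, lies in `F0`.
-/

section Scores

variable [DecidableEq V]

theorem scoreAcc_nil (F : Finset V) : scoreAcc F [] = (0, ∅) := rfl

theorem scoreAcc_concat (F : Finset V) (w : List V) (a : V) :
    scoreAcc F (w ++ [a]) = mgStep F (scoreAcc F w) a := by
  simp [scoreAcc, List.foldl_append]

theorem mgStep_fst_le (F : Finset V) (s : ℕ × Finset V) (a : V) :
    (mgStep F s a).1 ≤ s.1 + 1 := by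
  unfold mgStep; split_ifs <;> simp

theorem mgStep_of_mem {F : Finset V} (s : ℕ × Finset V) {a : V} (ha : a ∈ F) :
    mgStep F s a = (s.1 + 1, ∅) ∨ mgStep F s a = (s.1, insert a s.2) := by
  unfold mgStep
  rw [if_pos ha]
  split_ifs
  exacts [Or.inl rfl, Or.inr rfl]

theorem scoreAcc_snd_subset (F : Finset V) (w : List V) : (scoreAcc F w).2 ⊆ F := by
  induction w using List.reverseRecOn with
  | nil => exact Finset.empty_subset F
  | append_singleton w a ih =>
    rw [scoreAcc_concat]
    unfold mgStep
    split_ifs with ha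
    exacts [Finset.empty_subset F, Finset.insert_subset ha ih, Finset.empty_subset F]

/-- A sweep is completed, and the accumulator reset, as soon as it would become all of `F`. -/
theorem scoreAcc_snd_ne {F : Finset V} (hF : F.Nonempty) (w : List V) :
    (scoreAcc F w).2 ≠ F := by
  induction w using List.reverseRecOn with
  | nil => exact hF.ne_empty.symm
  | append_singleton w a ih =>
    rw [scoreAcc_concat]
    unfold mgStep
    split_ifs with ha hsweep
    · exact hF.ne_empty.symm
    · intro hins
      simp only at hins
      by_cases hmem : a ∈ (scoreAcc F w).2
      · exact ih (by rwa [Finset.insert_eq_self.mpr hmem] at hins)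
      · have hacc := Finset.erase_insert hmem
        rw [hins] at hacc
        exact hsweep hacc.symm
    · exact hF.ne_empty.symm

theorem scoreAcc_eq_of_scoreEq {𝓕 : Set (Finset V)} {w w' : List V} (h : ScoreEq 𝓕 w w')
    {F : Finset V} (hF : F ∈ 𝓕) : scoreAcc F w = scoreAcc F w' := by
  rcases h.1.2 F hF with h1 | h1 <;> rcases h.2.2 F hF with h2 | h2
  · omega
  · omega
  · omega
  · exact Prod.ext h1.1 (h1.2.antisymm h2.2)

theorem ScoreEq.concat {𝓕 : Set (Finset V)} {w w' : List V} (h : ScoreEq 𝓕 w w') (a : V) :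
    ScoreEq 𝓕 (w ++ [a]) (w' ++ [a]) := by
  have hs : ∀ F ∈ 𝓕, scoreAcc F (w ++ [a]) = scoreAcc F (w' ++ [a]) := fun F hF => by
    rw [scoreAcc_concat, scoreAcc_concat, scoreAcc_eq_of_scoreEq h hF]
  exact ⟨⟨by simp, fun F hF => Or.inr ⟨by rw [hs F hF], by rw [hs F hF]⟩⟩,
    ⟨by simp, fun F hF => Or.inr ⟨by rw [hs F hF], by rw [hs F hF]⟩⟩⟩

end Scores

section Prefixes

theorem prefixList_zero (ρ : ℕ → V) : prefixList ρ 0 = [] := rfl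

theorem prefixList_succ (ρ : ℕ → V) (n : ℕ) :
    prefixList ρ (n + 1) = prefixList ρ n ++ [ρ n] := by
  simp [prefixList, List.range_succ]

theorem prefixList_one (ρ : ℕ → V) : prefixList ρ 1 = [ρ 0] := by
  rw [prefixList_succ, prefixList_zero, List.nil_append]

theorem prefixList_length (ρ : ℕ → V) (n : ℕ) : (prefixList ρ n).length = n := by
  simp [prefixList]

theorem prefixList_getLast? (ρ : ℕ → V) (n : ℕ) :
    (prefixList ρ (n + 1)).getLast? = some (ρ n) := by
  rw [prefixList_succ, List.getLast?_concat]

theorem prefixList_take (ρ : ℕ → V) {k n : ℕ} (h : k ≤ n) :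
    (prefixList ρ n).take k = prefixList ρ k := by
  rw [prefixList, prefixList, ← List.map_take, List.take_range, Nat.min_eq_left h]

end Prefixes

section InfinitySet

theorem eventually_mem_infSet [Finite V] (ρ : ℕ → V) :
    ∃ N, ∀ n, N ≤ n → ρ n ∈ infSet ρ := by
  have hnot : ∀ u : V, ∀ᶠ n in Filter.atTop, u ∉ infSet ρ → ρ n ≠ u := by
    intro u
    by_cases hu : u ∈ infSet ρ
    · exact Filter.Eventually.of_forall fun _ h => absurd hu h
    · simp only [infSet, Set.mem_ofPred_eq, not_forall, not_exists, not_and] at hu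
      obtain ⟨N, hN⟩ := hu
      exact Filter.eventually_atTop.2 ⟨N, fun n hn _ => hN n hn⟩
  obtain ⟨N, hN⟩ := Filter.eventually_atTop.1 (Filter.eventually_all.2 hnot)
  exact ⟨N, fun n hn => by_contra fun h => hN n hn (ρ n) h rfl⟩

theorem isLoop_infSet [Finite V] {A : Arena V} {ρ : ℕ → V} (hρ : IsPlay A ρ) :
    IsLoop A (infSet ρ) := by
  obtain ⟨N, hN⟩ := eventually_mem_infSet ρ
  rintro _ hu _ hu'
  obtain ⟨n, hn, rfl⟩ := hu N
  obtain ⟨m, hm, rfl⟩ := hu' n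
  clear hu hu'
  induction m, hm using Nat.le_induction with
  | base => exact Relation.ReflTransGen.refl
  | succ m hnm ih => exact ih.tail ⟨hρ m, hN m (by omega), hN (m + 1) (by omega)⟩

theorem coe_infFinset [Fintype V] (ρ : ℕ → V) : (infFinset ρ : Set V) = infSet ρ :=
  Set.Finite.coe_toFinset _

end InfinitySet

section Unbounded

variable [DecidableEq V] {F : Finset V} {ρ : ℕ → V} {N : ℕ}

theorem scoreAcc_prefixList_lt_or_image_subset (hmem : ∀ n, N ≤ n → ρ n ∈ F) {n m : ℕ}
    (hn : N ≤ n) (hnm : n ≤ m) :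
    (scoreAcc F (prefixList ρ n)).1 < (scoreAcc F (prefixList ρ m)).1 ∨
      (scoreAcc F (prefixList ρ n)).1 ≤ (scoreAcc F (prefixList ρ m)).1 ∧
        (Finset.Ico n m).image ρ ⊆ (scoreAcc F (prefixList ρ m)).2 := by
  induction m, hnm using Nat.le_induction with
  | base => exact Or.inr ⟨le_rfl, by simp⟩
  | succ m hnm ih =>
    rw [prefixList_succ, scoreAcc_concat]
    rcases mgStep_of_mem (scoreAcc F (prefixList ρ m)) (hmem m (hn.trans hnm)) with h | h <;>
      rw [h]
    · left; omega
    · rcases ih with ih | ⟨hle, hsub⟩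
      · left; exact ih
      · right
        refine ⟨hle, ?_⟩
        rw [Nat.Ico_succ_right_eq_insert_Ico hnm, Finset.image_insert]
        exact Finset.insert_subset_insert _ hsub

theorem exists_scoreAcc_prefixList_lt (hmem : ∀ n, N ≤ n → ρ n ∈ F)
    (hvis : (F : Set V) ⊆ infSet ρ) (hF : F.Nonempty) {n : ℕ} (hn : N ≤ n) :
    ∃ m, n ≤ m ∧ (scoreAcc F (prefixList ρ n)).1 < (scoreAcc F (prefixList ρ m)).1 := by
  have hlater : ∀ u ∈ F, ∃ j, n ≤ j ∧ ρ j = u := fun u hu => hvis hu n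
  choose! j hj using hlater
  let m := F.sup j + 1
  have hnm : n ≤ m := by
    obtain ⟨u, hu⟩ := hF
    exact (hj u hu).1.trans (Nat.le_succ_of_le (Finset.le_sup hu))
  refine ⟨m, hnm, ?_⟩
  rcases scoreAcc_prefixList_lt_or_image_subset hmem hn hnm with hlt | ⟨-, hsub⟩
  · exact hlt
  · refine absurd ((scoreAcc_snd_subset F _).antisymm fun u hu => hsub ?_) (scoreAcc_snd_ne hF _)
    exact Finset.mem_image.2 ⟨j u, Finset.mem_Ico.2
      ⟨(hj u hu).1, Nat.lt_succ_of_le (Finset.le_sup hu)⟩, (hj u hu).2⟩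

theorem exists_le_scoreAcc_prefixList (hmem : ∀ n, N ≤ n → ρ n ∈ F)
    (hvis : (F : Set V) ⊆ infSet ρ) (hF : F.Nonempty) (k : ℕ) :
    ∃ m, N ≤ m ∧ k ≤ (scoreAcc F (prefixList ρ m)).1 := by
  induction k with
  | zero => exact ⟨N, le_rfl, Nat.zero_le _⟩
  | succ k ih =>
    obtain ⟨m, hNm, hm⟩ := ih
    obtain ⟨m', hmm', hlt⟩ := exists_scoreAcc_prefixList_lt hmem hvis hF hNm
    exact ⟨m', hNm.trans hmm', by omega⟩

theorem infFinset_notMem_of_maxScoreLe [Fintype V] {𝓕 : Set (Finset V)} {k : ℕ}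
    (hscore : ∀ n, MaxScoreLe 𝓕 (prefixList ρ (n + 1)) k) : infFinset ρ ∉ 𝓕 := by
  intro hinf
  obtain ⟨N, hN⟩ := eventually_mem_infSet ρ
  have hmem : ∀ n, N ≤ n → ρ n ∈ infFinset ρ := fun n hn => by
    rw [← Finset.mem_coe, coe_infFinset]; exact hN n hn
  obtain ⟨m, -, hm⟩ := exists_le_scoreAcc_prefixList hmem (coe_infFinset ρ).le
    ⟨ρ N, hmem N le_rfl⟩ (k + 1)
  cases m with
  | zero => simp [prefixList_zero, scoreAcc_nil] at hm
  | succ m =>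
    have := hscore m _ hinf _ (by simp [prefixList_succ]) List.prefix_rfl
    omega

end Unbounded

section SafetyGame

variable [DecidableEq V] {A : Arena V} {F1 : Set (Finset V)}

theorem concat_mem_playsLe3 {w : List V} {u a : V} (hw : w ∈ PlaysLt3 A F1)
    (hlast : w.getLast? = some u) (hE : A.E u a) : w ++ [a] ∈ PlaysLe3 A F1 := by
  have hplay : PlayPref A (w ++ [a]) := by
    refine ⟨by simp, List.IsChain.append hw.1.2 (List.isChain_singleton a) fun x hx y hy => ?_⟩
    simp_all
  have hle3 : MaxScoreLe F1 (w ++ [a]) 3 := by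
    intro F hF x hx hpre
    rcases List.prefix_concat_iff.mp hpre with rfl | hpre
    · have := hw.2 F hF w hw.1.1 List.prefix_rfl
      have := mgStep_fst_le F (scoreAcc F w) a
      rw [scoreAcc_concat]; omega
    · exact (hw.2 F hF x hx hpre).trans (by omega)
  by_cases hle2 : MaxScoreLe F1 (w ++ [a]) 2
  · exact Or.inl ⟨hplay, hle2⟩
  · exact Or.inr ⟨hplay, w, a, rfl, hw.2, hle3, hle2⟩

theorem mem_playsLt3_of_mk_mem_sgSafe {w : List V} (hw : w ∈ PlaysLe3 A F1)
    (hs : Quotient.mk (sgSetoid A F1) ⟨w, hw⟩ ∈ sgSafe A F1) : w ∈ PlaysLt3 A F1 := by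
  obtain ⟨w', _, hw', hmk⟩ := hs
  have heq : ScoreEq F1 w w' := Quotient.exact hmk
  rcases hw with hw | ⟨-, x, a, rfl, hx, -, hnot⟩
  · exact hw
  simp only [MaxScoreLe, not_forall, not_le] at hnot
  obtain ⟨F, hF, y, hy, hpre, hscore⟩ := hnot
  rcases List.prefix_concat_iff.mp hpre with rfl | hpre
  · have := hw'.2 F hF w' hw'.1.1 List.prefix_rfl
    rw [scoreAcc_eq_of_scoreEq heq hF] at hscore
    omega
  · exact absurd (hx F hF y hy hpre) (by omega)

variable (A F1)

open Classical in
/-- Outside `Plays_{≤3}` this takes the junk value `f(v)`. -/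
noncomputable def classOf (v : V) (w : List V) : SVert A F1 :=
  if h : w ∈ PlaysLe3 A F1 then Quotient.mk (sgSetoid A F1) ⟨w, h⟩ else sgF A F1 v

noncomputable def classHistory (v : V) (w : List V) : List (SVert A F1) :=
  (List.range w.length).map fun k => classOf A F1 v (w.take (k + 1))

open Classical in
noncomputable def simulationStrategy (v : V) (σS : List (SVert A F1) → SVert A F1 → SVert A F1)
    (w : List V) (u : V) : V :=
  if h : ∃ a, A.E u a ∧
      classOf A F1 v (w ++ [u] ++ [a]) = σS (classHistory A F1 v w) (classOf A F1 v (w ++ [u]))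
  then h.choose else (A.succ u).choose

variable {A F1}

theorem classOf_of_mem (v : V) {w : List V} (h : w ∈ PlaysLe3 A F1) :
    classOf A F1 v w = Quotient.mk (sgSetoid A F1) ⟨w, h⟩ := dif_pos h

theorem classOf_singleton (v u : V) : classOf A F1 v [u] = sgF A F1 u :=
  classOf_of_mem v _

theorem classHistory_prefixList (v : V) (ρ : ℕ → V) (n : ℕ) :
    classHistory A F1 v (prefixList ρ n) =
      (List.range n).map fun k => classOf A F1 v (prefixList ρ (k + 1)) := by
  rw [classHistory, prefixList_length]
  refine List.map_congr_left fun k hk => ?_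
  rw [prefixList_take ρ (List.mem_range.1 hk)]

theorem classOf_mem_sgPos_zero_iff (v : V) {w : List V} {u : V} (hw : w ∈ PlaysLe3 A F1)
    (hlast : w.getLast? = some u) : classOf A F1 v w ∈ sgPos A F1 0 ↔ u ∈ A.V0 := by
  rw [classOf_of_mem v hw]
  show (∃ x ∈ A.V0, w.getLast? = some x) ↔ u ∈ A.V0
  simp [hlast]

theorem sgE_classOf_concat (v : V) {w : List V} {u a : V} (hw : w ∈ PlaysLt3 A F1)
    (hlast : w.getLast? = some u) (hE : A.E u a) :
    sgE A F1 (classOf A F1 v w) (classOf A F1 v (w ++ [a])) :=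
  ⟨w, Or.inl hw, a, concat_mem_playsLe3 hw hlast hE, u, hw, hlast, hE,
    classOf_of_mem v _, classOf_of_mem v _⟩

theorem exists_classOf_concat_of_sgE (v : V) {w : List V} {u : V} (hw : w ∈ PlaysLt3 A F1)
    (hlast : w.getLast? = some u) {b : SVert A F1} (hE : sgE A F1 (classOf A F1 v w) b) :
    ∃ a, A.E u a ∧ classOf A F1 v (w ++ [a]) = b := by
  obtain ⟨w₀, _, a, _, u₀, -, hlast₀, hE₀, hmk, rfl⟩ := hE
  rw [classOf_of_mem v (Or.inl hw)] at hmk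
  have heq : ScoreEq F1 w w₀ := Quotient.exact hmk
  obtain rfl : u₀ = u := by simpa [hlast, hlast₀] using heq.1.1.symm
  exact ⟨a, hE₀, by
    rw [classOf_of_mem v (concat_mem_playsLe3 hw hlast hE₀)]; exact Quotient.sound (heq.concat a)⟩

theorem simulationStrategy_isStrat (v : V) (σS : List (SVert A F1) → SVert A F1 → SVert A F1) :
    IsStrat A (simulationStrategy A F1 v σS) := by
  intro w u
  unfold simulationStrategy
  split_ifs with h
  exacts [h.choose_spec.1, (A.succ u).choose_spec]

theorem classOf_simulationStrategy {v : V} {σS : List (SVert A F1) → SVert A F1 → SVert A F1}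
    (hσS : sgStratFor A F1 0 σS) {w : List V} {u : V} (hw : w ++ [u] ∈ PlaysLt3 A F1)
    (hu : u ∈ A.V0) :
    classOf A F1 v (w ++ [u] ++ [simulationStrategy A F1 v σS w u]) =
      σS (classHistory A F1 v w) (classOf A F1 v (w ++ [u])) := by
  have hlast : (w ++ [u]).getLast? = some u := List.getLast?_concat
  have hpos := (classOf_mem_sgPos_zero_iff v (Or.inl hw) hlast).2 hu
  obtain ⟨a, ha⟩ := A.succ u
  have hmove := hσS (classHistory A F1 v w) _ hpos ⟨_, sgE_classOf_concat v hw hlast ha⟩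
  have hex := exists_classOf_concat_of_sgE v hw hlast hmove
  rw [simulationStrategy, dif_pos hex]
  exact hex.choose_spec.2

variable {v : V} {σS : List (SVert A F1) → SVert A F1 → SVert A F1} {ρ : ℕ → V}

theorem sgConsList_map_classOf (hσS : sgStratFor A F1 0 σS)
    (hρ : ConsWith A 0 (simulationStrategy A F1 v σS) ρ) {n : ℕ}
    (hlt : ∀ k < n, prefixList ρ (k + 1) ∈ PlaysLt3 A F1) :
    sgConsList A F1 0 σS
      ((List.range (n + 1)).map fun k => classOf A F1 v (prefixList ρ (k + 1))) := by
  refine ⟨(List.isChain_map _).2 ((List.isChain_range_succ _ _).2 fun k hk => ?_),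
    fun k hk hpos => ?_⟩
  · rw [prefixList_succ ρ (k + 1)]
    exact sgE_classOf_concat v (hlt k hk) (prefixList_getLast? ρ k) (hρ.1 k)
  · simp only [List.length_map, List.length_range] at hk
    have hk' : k < n := by omega
    simp only [List.getElem_map, List.getElem_range] at hpos ⊢
    have hV0 : ρ k ∈ A.V0 :=
      (classOf_mem_sgPos_zero_iff v (Or.inl (hlt k hk')) (prefixList_getLast? ρ k)).1 hpos
    have hmove := hρ.2 k (by simpa [Arena.pos] using hV0)
    rw [← List.map_take, List.take_range, Nat.min_eq_left (by omega), ← classHistory_prefixList,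
      prefixList_succ ρ (k + 1), hmove, prefixList_succ ρ k]
    exact classOf_simulationStrategy hσS (prefixList_succ ρ k ▸ hlt k hk') hV0

theorem prefixList_mem_playsLt3 (hσS : sgStratFor A F1 0 σS)
    (hsafe : ∀ p, sgConsList A F1 0 σS p → p.head? = some (sgF A F1 v) →
      ∀ x ∈ p, x ∈ sgSafe A F1)
    (hρ0 : ρ 0 = v) (hρ : ConsWith A 0 (simulationStrategy A F1 v σS) ρ) (n : ℕ) :
    prefixList ρ (n + 1) ∈ PlaysLt3 A F1 := by
  induction n using Nat.strong_induction_on with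
  | _ n ih =>
  have hle : prefixList ρ (n + 1) ∈ PlaysLe3 A F1 := by
    cases n with
    | zero => exact Or.inl (prefixList_one ρ ▸ singleton_mem_lt3 A F1 (ρ 0))
    | succ m =>
      rw [prefixList_succ ρ (m + 1)]
      exact concat_mem_playsLe3 (ih m (by omega)) (prefixList_getLast? ρ m) (hρ.1 m)
  have hhead : ((List.range (n + 1)).map fun k => classOf A F1 v (prefixList ρ (k + 1))).head? =
      some (sgF A F1 v) := by
    simp [List.range_succ_eq_map, prefixList_one, classOf_singleton, hρ0]
  have hlast := hsafe _ (sgConsList_map_classOf hσS hρ ih) hhead _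
    (List.mem_map_of_mem (List.mem_range.2 (Nat.lt_succ_self n)))
  rw [classOf_of_mem v hle] at hlast
  exact mem_playsLt3_of_mk_mem_sgSafe hle hlast

end SafetyGame

theorem safety_to_muller_general [Fintype V] [DecidableEq V] (A : Arena V)
    (Fam : Fin 2 → Set (Finset V))
    (hcover : ∀ C : Finset V, C ∈ Fam 0 ∪ Fam 1 ↔ IsLoop A (↑C : Set V))
    (v : V)
    (hv : sgF A (Fam 1) v ∈ sgWin0 A (Fam 1)) :
    v ∈ MullerWinRegion A Fam 0 := by
  obtain ⟨σS, hσS, hsafe⟩ := hv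
  refine ⟨simulationStrategy A (Fam 1) v σS, simulationStrategy_isStrat v σS, fun ρ hρ0 hρ => ?_⟩
  have hloop : IsLoop A (infFinset ρ : Set V) := coe_infFinset ρ ▸ isLoop_infSet hρ.1
  have hscore (n : ℕ) : MaxScoreLe (Fam 1) (prefixList ρ (n + 1)) 2 :=
    (prefixList_mem_playsLt3 hσS hsafe hρ0 hρ n).2
  exact ((hcover _).2 hloop).resolve_right (infFinset_notMem_of_maxScoreLe hscore)

/-- If `f(v) = [v]` is in Player 0's winning region of the
associated safety game, then `v ∈ W_0(G)` in the Muller game. -/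
theorem safety_to_muller [Fintype V] [DecidableEq V] (A : Arena V)
    (Fam : Fin 2 → Set (Finset V))
    (hcover : ∀ C : Finset V, C ∈ Fam 0 ∪ Fam 1 ↔ IsLoop A (↑C : Set V))
    (hdisj : Disjoint (Fam 0) (Fam 1)) (v : V)
    (hv : sgF A (Fam 1) v ∈ sgWin0 A (Fam 1)) :
    v ∈ MullerWinRegion A Fam 0 :=
  safety_to_muller_general A Fam hcover v hv
end

section
/- Let w ∈ V⁺ be a nonempty finite word with LAR(w) = v_k v_{k−1} ⋯ v_1. Then w factorizes as w = x_k v_k x_{k−1} v_{k−1} ⋯ x_2 v_2 x_1 v_1 for some finite words x_i ∈ V* with occ(x_i) ⊆ {v_1, …, v_i} for every i. -/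
variable {V : Type*}

/-- One step of the latest-appearance-record update. -/
def larStep [DecidableEq V] (ℓ : List V) (v : V) : List V := ℓ.erase v ++ [v]

/-- The latest appearance record `LAR(w)` of a finite word. -/
def LARof [DecidableEq V] (w : List V) : List V := w.foldl larStep []

/-!
Reading `w` letter by letter keeps the invariant that `w` factorizes along its current record
`v_k ⋯ v_1`. Appending a new letter `v` makes it the new `v_1` and only enlarges the allowed
alphabets. Appending a letter `v = v_i` already in the record moves `v_i` to the end: the block
`x_i v_i` is absorbed into `x_{i-1}` (allowed, since `v_i` is now the last letter of the record
and hence in every alphabet) and the new last block is the empty word followed by `v`.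
-/

/-- `FactorsAlong w (v_k :: ⋯ :: [v_1])`: `w = x_k v_k ⋯ x_1 v_1` with every letter of `x_i`
among `v_i, …, v_1`. -/
inductive FactorsAlong : List V → List V → Prop
  | nil : FactorsAlong [] []
  | cons {x w ℓ : List V} {v : V} (hx : ∀ a ∈ x, a ∈ v :: ℓ) (h : FactorsAlong w ℓ) :
      FactorsAlong (x ++ v :: w) (v :: ℓ)

namespace FactorsAlong

variable {w ℓ : List V}

theorem prepend (h : FactorsAlong w ℓ) {y : List V} (hy : ∀ a ∈ y, a ∈ ℓ) :
    FactorsAlong (y ++ w) ℓ := by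
  cases h with
  | nil =>
    obtain rfl : y = [] := List.eq_nil_iff_forall_not_mem.2 fun a ha => by simpa using hy a ha
    exact nil
  | cons hx h =>
    rw [← List.append_assoc]
    exact cons (fun a ha => (List.mem_append.1 ha).elim (hy a) (hx a)) h

theorem append_singleton (h : FactorsAlong w ℓ) (v : V) :
    FactorsAlong (w ++ [v]) (ℓ ++ [v]) := by
  induction h with
  | nil => simpa using cons (x := []) (by simp) nil
  | cons hx _ ih =>
    simpa using cons (fun a ha => List.mem_append_left _ (hx a ha)) ih

theorem append_singleton_of_mem [DecidableEq V] (h : FactorsAlong w ℓ) {v : V} (hv : v ∈ ℓ) :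
    FactorsAlong (w ++ [v]) (ℓ.erase v ++ [v]) := by
  induction h with
  | nil => simp at hv
  | @cons x w' ℓ' u hx h ih =>
    rcases eq_or_ne v u with rfl | hne
    · have hxv : ∀ a ∈ x ++ [v], a ∈ ℓ' ++ [v] := by
        intro a ha
        rcases List.mem_append.1 ha with ha | ha
        · simpa [or_comm] using hx a ha
        · simp_all
      simpa using (h.append_singleton v).prepend hxv
    · have hv' : v ∈ ℓ' := (List.mem_cons.1 hv).resolve_left hne
      rw [List.erase_cons_tail (by simpa using hne.symm)]
      have hx' : ∀ a ∈ x, a ∈ u :: (ℓ'.erase v ++ [v]) := by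
        intro a ha
        rcases eq_or_ne a v with rfl | hav
        · simp
        · simpa [List.mem_erase_of_ne hav] using (List.mem_cons.1 (hx a ha)).imp_right Or.inl
      simpa using cons hx' (ih hv')

theorem append_larStep [DecidableEq V] (h : FactorsAlong w ℓ) (v : V) :
    FactorsAlong (w ++ [v]) (larStep ℓ v) := by
  by_cases hv : v ∈ ℓ
  · exact h.append_singleton_of_mem hv
  · simpa [larStep, List.erase_of_not_mem hv] using h.append_singleton v

theorem exists_ofFn (h : FactorsAlong w ℓ) :
    ∃ x : Fin ℓ.length → List V,
      w = (List.ofFn fun j => x j ++ [ℓ.get j]).flatten ∧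
        ∀ j : Fin ℓ.length, ∀ a ∈ x j, a ∈ ℓ.drop j.1 := by
  induction h with
  | nil => exact ⟨Fin.elim0, by simp, fun j => j.elim0⟩
  | @cons x w' ℓ' u hx _ ih =>
    obtain ⟨y, rfl, hy⟩ := ih
    refine ⟨Fin.cons x y, by simp [List.ofFn_succ], fun j => ?_⟩
    induction j using Fin.cases with
    | zero => simpa using hx
    | succ i => simpa using hy i

end FactorsAlong

theorem factorsAlong_LARof [DecidableEq V] (w : List V) : FactorsAlong w (LARof w) := by
  induction w using List.reverseRecOn with
  | nil => exact FactorsAlong.nil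
  | append_singleton u v ih =>
    simpa [LARof, List.foldl_append] using ih.append_larStep v

theorem lar_factorization_general [DecidableEq V] (w : List V) :
    ∃ x : Fin (LARof w).length → List V,
      w = (List.ofFn fun j => x j ++ [(LARof w).get j]).flatten ∧
        ∀ j : Fin (LARof w).length, ∀ a ∈ x j, a ∈ (LARof w).drop j.1 :=
  (factorsAlong_LARof w).exists_ofFn

/-- If `LAR(w) = v_k ⋯ v_1`, then `w` factorizes as
`w = x_k v_k x_{k-1} v_{k-1} ⋯ x_1 v_1` where the letters of `x_i` all belong to
`{v_1, …, v_i}`. (Here the `j`-th entry of `LAR w`, `j = 0, …, k-1`, is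
`v_{k-j}`, and `{v_1, …, v_{k-j}}` is the set of letters of `(LAR w).drop j`.) -/
theorem lar_factorization [DecidableEq V] (w : List V) (hw : w ≠ []) :
    ∃ x : Fin (LARof w).length → List V,
      w = (List.ofFn fun j => x j ++ [(LARof w).get j]).flatten ∧
        ∀ j : Fin (LARof w).length, ∀ a ∈ x j, a ∈ (LARof w).drop j.1 :=
  lar_factorization_general w
end
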